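/- arXiv:1401.4522 — 2 statements merged into one kernel-verified Lean document; each statement's English description precedes it below -/
import Mathlib

section
/- For every odd integer n ≥ 9 with n ≡ 1 or 3 (mod 4), the graph H_n ∪ ((n−3)/2) K_1 is super edge-magic, where H_n is the wheel W_n minus a spoke; hence μ_s(H_n) ≤ (n−3)/2. -/
/-!
With `n = 2m + 1`, label the hub `3m + 1` and the rim vertex `x_i` by `(i + 1)/2` for odd `i` and
by `m + 1 + i/2` for even `i`. Rim edges `x_i x_{i+1}` get label sums `m + 2 + i`, the closing
edge `x_n x_1` gets `m + 2`, and since `x_2, …, x_n` carry the labels `2, …, 2m + 1` the spokes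
get `3m + 3, …, 5m + 2`. The edge sums are thus the consecutive integers `m + 2, …, 5m + 2`,
which makes the graph super edge-magic once the unused labels `2m + 2, …, 3m` are placed on
`m - 1` isolated vertices.
-/

open SimpleGraph

/-- A super edge-magic labeling of `G` with magic constant `k`: a bijection from
vertices and edges onto `{1, …, p+q}` sending vertices onto `{1, …, p}`, with
`f x + f (xy) + f y = k` for every edge `xy`. -/
def IsSEMWith {V : Type*} [Fintype V] (G : SimpleGraph V) (k : ℕ) : Prop :=
  ∃ (f : V → ℕ) (g : G.edgeSet → ℕ),
    Function.Injective (Sum.elim f g) ∧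
    Set.range (Sum.elim f g) = Set.Icc 1 (Fintype.card V + G.edgeSet.ncard) ∧
    Set.range f = Set.Icc 1 (Fintype.card V) ∧
    ∀ (x y : V) (h : G.Adj x y), f x + g ⟨s(x, y), G.mem_edgeSet.mpr h⟩ + f y = k

/-- `G` is super edge-magic. -/
def IsSEM {V : Type*} [Fintype V] (G : SimpleGraph V) : Prop :=
  ∃ k : ℕ, IsSEMWith G k

/-- The graph `G ∪ t K₁`: `G` together with `t` added isolated vertices. -/
def unionIsolated {V : Type*} (G : SimpleGraph V) (t : ℕ) : SimpleGraph (V ⊕ Fin t) :=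
  G.map Function.Embedding.inl

/-- The super edge-magic deficiency `μₛ(G)`: the least `t` such that `G ∪ t K₁`
is super edge-magic, or `⊤` if there is no such `t`. -/
noncomputable def semDeficiency {V : Type*} [Fintype V] (G : SimpleGraph V) : ℕ∞ :=
  sInf ((fun t : ℕ => (t : ℕ∞)) '' {t : ℕ | IsSEM (unionIsolated G t)})

/-- `H n`: the wheel `W_n` (hub `0`, rim `1, …, n`) minus the spoke `{0, 1}`. -/
def wheelMinusSpoke (n : ℕ) : SimpleGraph (Fin (n + 1)) :=
  SimpleGraph.fromRel (fun i j =>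
    ((i : ℕ) = 0 ∧ 2 ≤ (j : ℕ)) ∨
    ((j : ℕ) = (i : ℕ) + 1 ∧ 1 ≤ (i : ℕ)) ∨
    ((i : ℕ) = n ∧ (j : ℕ) = 1))

/-- The join `P_n + K̄_m`: a path `u_1 … u_n` plus `m` vertices joined to every `u_i`. -/
def pathJoin (n m : ℕ) : SimpleGraph (Fin n ⊕ Fin m) :=
  SimpleGraph.fromRel (fun a b =>
    (∃ i j : Fin n, a = Sum.inl i ∧ b = Sum.inl j ∧ (j : ℕ) = (i : ℕ) + 1) ∨
    (∃ (i : Fin n) (j : Fin m), a = Sum.inl i ∧ b = Sum.inr j))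

/-- The join `K_{1,n} + K̄_m`: a star with center `Sum.inl 0` and leaves
`Sum.inl i`, `i ≠ 0`, plus `m` vertices joined to all star vertices. -/
def starJoin (n m : ℕ) : SimpleGraph (Fin (n + 1) ⊕ Fin m) :=
  SimpleGraph.fromRel (fun a b =>
    (∃ i : Fin (n + 1), a = Sum.inl 0 ∧ b = Sum.inl i ∧ i ≠ 0) ∨
    (∃ (i : Fin (n + 1)) (j : Fin m), a = Sum.inl i ∧ b = Sum.inr j))

/-- The join `C_n + K̄_m`: a cycle `u_1 … u_n` plus `m` vertices joined to every `u_i`. -/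
def cycleJoin (n m : ℕ) : SimpleGraph (Fin n ⊕ Fin m) :=
  SimpleGraph.fromRel (fun a b =>
    (∃ i j : Fin n, a = Sum.inl i ∧ b = Sum.inl j ∧
      ((j : ℕ) = (i : ℕ) + 1 ∨ ((i : ℕ) = n - 1 ∧ (j : ℕ) = 0))) ∨
    (∃ (i : Fin n) (j : Fin m), a = Sum.inl i ∧ b = Sum.inr j))

/-- The join `G + K̄_m`: `G` plus `m` new vertices joined to every vertex of `G`. -/
def joinIsolated {V : Type*} (G : SimpleGraph V) (m : ℕ) : SimpleGraph (V ⊕ Fin m) :=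
  SimpleGraph.fromRel (fun a b =>
    (∃ x y : V, a = Sum.inl x ∧ b = Sum.inl y ∧ G.Adj x y) ∨
    (∃ (x : V) (j : Fin m), a = Sum.inl x ∧ b = Sum.inr j))

open Function

section EdgeSum

variable {V : Type*}

def edgeSum (f : V → ℕ) : Sym2 V → ℕ :=
  Sym2.lift ⟨fun x y => f x + f y, fun _ _ => Nat.add_comm _ _⟩

@[simp]
lemma edgeSum_mk (f : V → ℕ) (x y : V) : edgeSum f s(x, y) = f x + f y := rfl

lemma edgeSum_comp_map {W : Type*} (f : W → ℕ) (g : V → W) :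
    edgeSum f ∘ Sym2.map g = edgeSum (f ∘ g) := by
  funext e
  induction e using Sym2.ind
  rfl

variable [Fintype V]

lemma range_eq_Icc_of_injective {f : V → ℕ} (hf : Injective f)
    (hf_mem : ∀ v, f v ∈ Set.Icc 1 (Fintype.card V)) :
    Set.range f = Set.Icc 1 (Fintype.card V) := by
  refine Set.eq_of_subset_of_ncard_le (Set.range_subset_iff.2 hf_mem) ?_ (Set.finite_Icc _ _)
  rw [Set.ncard_range_of_injective hf, Nat.card_eq_fintype_card, ← Finset.coe_Icc,
    Set.ncard_coe_finset, Nat.card_Icc, Nat.add_sub_cancel]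

lemma exists_injective_sumElim_of_injective {f : V → ℕ} {t : ℕ} (hf : Injective f)
    (hf_mem : ∀ v, f v ∈ Set.Icc 1 (Fintype.card V + t)) :
    ∃ h : Fin t → ℕ, Injective (Sum.elim f h) ∧
      ∀ u, Sum.elim f h u ∈ Set.Icc 1 (Fintype.card V + t) := by
  classical
  set free := Finset.Icc 1 (Fintype.card V + t) \ Finset.univ.image f
  have hsub : Finset.univ.image f ⊆ Finset.Icc 1 (Fintype.card V + t) := by
    simpa [Finset.image_subset_iff] using hf_mem
  have hcard : free.card = t := by
    rw [Finset.card_sdiff_of_subset hsub, Nat.card_Icc, Finset.card_image_of_injective _ hf,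
      Finset.card_univ]
    omega
  let e := Finset.equivFinOfCardEq hcard
  have he : ∀ j, (e.symm j : ℕ) ∈ free := fun j => (e.symm j).2
  refine ⟨fun j => e.symm j, hf.sumElim (Subtype.val_injective.comp e.symm.injective) ?_, ?_⟩
  · intro v j hvj
    have := he j
    simp only [free, Finset.mem_sdiff, Finset.mem_image] at this
    exact this.2 ⟨v, Finset.mem_univ v, hvj⟩
  · rintro (v | j)
    · exact hf_mem v
    · simpa [free] using (Finset.mem_sdiff.1 (he j)).1

/-- The criterion of Figueroa-Centeno, Ichishima and Muntaner-Batle: the edge labels are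
`p + b + 1` minus the edge sums. -/
theorem isSEMWith_of_edgeSum (G : SimpleGraph V) {f : V → ℕ} {a b : ℕ} (hf : Injective f)
    (hf_mem : ∀ v, f v ∈ Set.Icc 1 (Fintype.card V))
    (hinj : Set.InjOn (edgeSum f) G.edgeSet) (himage : edgeSum f '' G.edgeSet = Set.Icc a b) :
    IsSEMWith G (Fintype.card V + b + 1) := by
  set p := Fintype.card V
  have hq : G.edgeSet.ncard = b + 1 - a := by
    rw [← hinj.ncard_image, himage, ← Finset.coe_Icc, Set.ncard_coe_finset, Nat.card_Icc]
  have hsum_mem : ∀ e : G.edgeSet, edgeSum f e ∈ Set.Icc a b :=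
    fun e => himage ▸ Set.mem_image_of_mem _ e.2
  let g : G.edgeSet → ℕ := fun e => p + b + 1 - edgeSum f e
  have hg : Injective g := by
    intro e e' hee'
    have := hsum_mem e
    have := hsum_mem e'
    exact Subtype.ext (hinj e.2 e'.2 (by simp only [g, Set.mem_Icc] at *; omega))
  have hg_range : Set.range g = Set.Icc (p + 1) (p + (b + 1 - a)) := by
    ext w
    constructor
    · rintro ⟨e, rfl⟩
      have := hsum_mem e
      simp only [g, Set.mem_Icc] at *
      omega
    · rintro ⟨hw₁, hw₂⟩
      obtain ⟨e, he, hew⟩ : p + b + 1 - w ∈ edgeSum f '' G.edgeSet := by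
        rw [himage]
        exact ⟨by omega, by omega⟩
      exact ⟨⟨e, he⟩, by simp only [g, hew]; omega⟩
  have hf_range := range_eq_Icc_of_injective hf hf_mem
  refine ⟨f, g, hf.sumElim hg ?_, ?_, hf_range, fun x y hxy => ?_⟩
  · intro v e hve
    have := (hf_mem v).2
    have := hg_range ▸ Set.mem_range_self e
    simp only [Set.mem_Icc] at this
    omega
  · rw [Set.Sum.elim_range, hf_range, hg_range, hq]
    ext w
    simp only [Set.mem_union, Set.mem_Icc]
    omega
  · have := hsum_mem ⟨s(x, y), G.mem_edgeSet.2 hxy⟩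
    simp only [edgeSum_mk, Set.mem_Icc, g] at this ⊢
    omega

theorem isSEMWith_unionIsolated_of_edgeSum (G : SimpleGraph V) (t : ℕ) {f : V → ℕ} {a b : ℕ}
    (hf : Injective f) (hf_mem : ∀ v, f v ∈ Set.Icc 1 (Fintype.card V + t))
    (hinj : Set.InjOn (edgeSum f) G.edgeSet) (himage : edgeSum f '' G.edgeSet = Set.Icc a b) :
    IsSEMWith (unionIsolated G t) (Fintype.card V + t + b + 1) := by
  obtain ⟨h, hinj', hmem'⟩ := exists_injective_sumElim_of_injective hf hf_mem
  have hcard : Fintype.card (V ⊕ Fin t) = Fintype.card V + t := by simp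
  have hsum : edgeSum (Sum.elim f h) ∘ Sym2.map Sum.inl = edgeSum f := by
    rw [edgeSum_comp_map, Sum.elim_comp_inl]
  have key := isSEMWith_of_edgeSum (unionIsolated G t) (a := a) (b := b) hinj'
    (hcard ▸ hmem') ?_ ?_
  · rwa [hcard] at key
  · rw [unionIsolated, edgeSet_map]
    exact Set.InjOn.image_of_comp (hsum ▸ hinj)
  · rw [unionIsolated, edgeSet_map, ← himage, ← hsum]
    exact (Set.image_comp _ _ _).symm

end EdgeSum

namespace WheelMinusSpoke

def label (m i : ℕ) : ℕ :=
  if i = 0 then 3 * m + 1 else if i % 2 = 1 then (i + 1) / 2 else m + 1 + i / 2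

variable {m i j : ℕ}

lemma label_zero : label m 0 = 3 * m + 1 := rfl

lemma label_injOn (hm : 1 ≤ m) : Set.InjOn (label m) (Set.Iic (2 * m + 1)) := by
  intro i hi j hj h
  simp only [Set.mem_Iic] at hi hj
  grind [label]

lemma label_mem_Icc (hi : i ≤ 2 * m + 1) : label m i ∈ Set.Icc 1 (3 * m + 1) := by
  simp only [Set.mem_Icc]
  grind [label]

lemma label_mem_Icc_of_two_le (h₂ : 2 ≤ j) (hj : j ≤ 2 * m + 1) :
    label m j ∈ Set.Icc 2 (2 * m + 1) := by
  simp only [Set.mem_Icc]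
  grind [label]

lemma exists_label_eq {v : ℕ} (h₂ : 2 ≤ v) (hv : v ≤ 2 * m + 1) :
    ∃ j, 2 ≤ j ∧ j ≤ 2 * m + 1 ∧ label m j = v := by
  rcases le_or_gt v (m + 1) with h | h
  · exact ⟨2 * v - 1, by omega, by omega, by grind [label]⟩
  · exact ⟨2 * v - 2 * m - 2, by omega, by omega, by grind [label]⟩

lemma label_add_label_succ (h₁ : 1 ≤ i) :
    label m i + label m (i + 1) = m + 2 + i := by
  grind [label]

lemma label_add_label_one : label m (2 * m + 1) + label m 1 = m + 2 := by
  grind [label]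

/-- The relation defining `wheelMinusSpoke n`, on vertex indices. -/
def IsArc (n i j : ℕ) : Prop :=
  (i = 0 ∧ 2 ≤ j) ∨ (j = i + 1 ∧ 1 ≤ i) ∨ (i = n ∧ j = 1)

lemma exists_isArc_of_mem_edgeSet {n : ℕ} {e : Sym2 (Fin (n + 1))}
    (he : e ∈ (wheelMinusSpoke n).edgeSet) :
    ∃ x y : Fin (n + 1), IsArc n x y ∧ e = s(x, y) := by
  induction e using Sym2.ind with
  | h x y =>
    rcases (fromRel_adj _ x y).1 ((mem_edgeSet _).1 he) with ⟨-, hxy | hyx⟩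
    · exact ⟨x, y, hxy, rfl⟩
    · exact ⟨y, x, hyx, Sym2.eq_swap⟩

lemma label_add_of_isArc (h : IsArc (2 * m + 1) i j) (hj : j ≤ 2 * m + 1) :
    (i = 0 ∧ label m i + label m j = 3 * m + 1 + label m j ∧ 2 ≤ label m j ∧
        label m j ≤ 2 * m + 1) ∨
      (j = i + 1 ∧ label m i + label m j = m + 2 + i ∧ 1 ≤ i ∧ i ≤ 2 * m) ∨
      (i = 2 * m + 1 ∧ j = 1 ∧ label m i + label m j = m + 2) := by
  rcases h with ⟨rfl, h₂⟩ | ⟨rfl, h₁⟩ | ⟨rfl, rfl⟩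
  · exact Or.inl ⟨rfl, rfl, label_mem_Icc_of_two_le h₂ hj⟩
  · exact Or.inr (Or.inl ⟨rfl, label_add_label_succ h₁, h₁, by omega⟩)
  · exact Or.inr (Or.inr ⟨rfl, rfl, label_add_label_one⟩)

/-- The three kinds of arcs have label sums in the disjoint ranges `{m + 2}`,
`[m + 3, 3m + 2]` and `[3m + 3, 5m + 2]`. -/
lemma isArc_eq_of_label_add_eq (hm : 1 ≤ m) {i' j' : ℕ} (h : IsArc (2 * m + 1) i j)
    (h' : IsArc (2 * m + 1) i' j') (hj : j ≤ 2 * m + 1) (hj' : j' ≤ 2 * m + 1)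
    (hsum : label m i + label m j = label m i' + label m j') : i = i' ∧ j = j' := by
  rcases label_add_of_isArc h hj with ⟨rfl, hs⟩ | hs | hs <;>
    rcases label_add_of_isArc h' hj' with ⟨rfl, hs'⟩ | hs' | hs'
  · exact ⟨rfl, label_injOn hm (Set.mem_Iic.2 hj) (Set.mem_Iic.2 hj') (by omega)⟩
  all_goals omega

lemma label_add_mem_Icc_of_isArc (h : IsArc (2 * m + 1) i j) (hj : j ≤ 2 * m + 1) :
    label m i + label m j ∈ Set.Icc (m + 2) (5 * m + 2) := by
  rcases label_add_of_isArc h hj with h | h | h <;> simp only [Set.mem_Icc] <;> omega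

lemma exists_isArc_label_add_eq {r : ℕ} (hr : r ∈ Set.Icc (m + 2) (5 * m + 2)) :
    ∃ i j, i ≤ 2 * m + 1 ∧ j ≤ 2 * m + 1 ∧ IsArc (2 * m + 1) i j ∧
      label m i + label m j = r := by
  obtain ⟨hr₁, hr₂⟩ := hr
  rcases Nat.lt_or_ge r (m + 3) with hr | hr
  · exact ⟨2 * m + 1, 1, le_rfl, by omega, Or.inr (Or.inr ⟨rfl, rfl⟩),
      by rw [label_add_label_one]; omega⟩
  rcases Nat.lt_or_ge r (3 * m + 3) with hr' | hr'
  · refine ⟨r - m - 2, r - m - 2 + 1, by omega, by omega,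
      Or.inr (Or.inl ⟨rfl, by omega⟩), ?_⟩
    rw [label_add_label_succ (by omega)]
    omega
  · obtain ⟨j, hj₂, hj, hlabel⟩ := exists_label_eq (m := m) (v := r - (3 * m + 1)) (by omega)
      (by omega)
    exact ⟨0, j, by omega, hj, Or.inl ⟨rfl, hj₂⟩, by rw [hlabel, label_zero]; omega⟩

variable (m) in
abbrev vertexLabel (v : Fin (2 * m + 1 + 1)) : ℕ := label m v

lemma vertexLabel_injective (hm : 1 ≤ m) : Injective (vertexLabel m) := fun x y h =>
  Fin.ext (label_injOn hm (Set.mem_Iic.2 (by omega)) (Set.mem_Iic.2 (by omega)) h)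

lemma edgeSum_injOn (hm : 1 ≤ m) :
    Set.InjOn (edgeSum (vertexLabel m)) (wheelMinusSpoke (2 * m + 1)).edgeSet := by
  intro e he e' he' hsum
  obtain ⟨x, y, hxy, rfl⟩ := exists_isArc_of_mem_edgeSet he
  obtain ⟨x', y', hxy', rfl⟩ := exists_isArc_of_mem_edgeSet he'
  obtain ⟨hx, hy⟩ := isArc_eq_of_label_add_eq hm hxy hxy' (by omega) (by omega) hsum
  rw [Fin.ext hx, Fin.ext hy]

lemma edgeSum_image (hm : 1 ≤ m) :
    edgeSum (vertexLabel m) '' (wheelMinusSpoke (2 * m + 1)).edgeSet =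
      Set.Icc (m + 2) (5 * m + 2) := by
  ext r
  constructor
  · rintro ⟨e, he, rfl⟩
    obtain ⟨x, y, hxy, rfl⟩ := exists_isArc_of_mem_edgeSet he
    exact label_add_mem_Icc_of_isArc hxy (by omega)
  · intro hr
    obtain ⟨i, j, hi, hj, harc, hsum⟩ := exists_isArc_label_add_eq hr
    have hne : (⟨i, by omega⟩ : Fin (2 * m + 1 + 1)) ≠ ⟨j, by omega⟩ := by
      simp only [IsArc] at harc
      exact Fin.ne_of_val_ne (show i ≠ j by omega)
    refine ⟨s(⟨i, by omega⟩, ⟨j, by omega⟩), ?_, hsum⟩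
    exact (mem_edgeSet _).2 ((fromRel_adj _ _ _).2 ⟨hne, Or.inl harc⟩)

theorem isSEM_unionIsolated (hm : 1 ≤ m) :
    IsSEM (unionIsolated (wheelMinusSpoke (2 * m + 1)) (m - 1)) := by
  have hf_mem :
      ∀ v, vertexLabel m v ∈ Set.Icc 1 (Fintype.card (Fin (2 * m + 1 + 1)) + (m - 1)) := by
    intro v
    have := label_mem_Icc (m := m) (i := v) (by omega)
    simp only [vertexLabel, Fintype.card_fin, Set.mem_Icc] at this ⊢
    omega
  exact ⟨_, isSEMWith_unionIsolated_of_edgeSum _ _ (vertexLabel_injective hm) hf_mem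
    (edgeSum_injOn hm) (edgeSum_image hm)⟩

end WheelMinusSpoke

/-- for every odd `n ≥ 9` with `n ≡ 1, 3 (mod 4)`, the graph
`H_n ∪ ((n−3)/2) K₁` is super edge-magic; hence `μₛ(H_n) ≤ (n−3)/2`. -/
theorem stmt5 (n : ℕ) (hn : 9 ≤ n) (hmod : n % 4 = 1 ∨ n % 4 = 3) :
    IsSEM (unionIsolated (wheelMinusSpoke n) ((n - 3) / 2)) ∧
    semDeficiency (wheelMinusSpoke n) ≤ (((n - 3) / 2 : ℕ) : ℕ∞) := by
  obtain ⟨m, hm, rfl⟩ : ∃ m, 1 ≤ m ∧ n = 2 * m + 1 := ⟨n / 2, by omega, by omega⟩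
  have hsem : IsSEM (unionIsolated (wheelMinusSpoke (2 * m + 1)) ((2 * m + 1 - 3) / 2)) := by
    rw [show (2 * m + 1 - 3) / 2 = m - 1 by omega]
    exact WheelMinusSpoke.isSEM_unionIsolated hm
  exact ⟨hsem, sInf_le ⟨_, hsem, rfl⟩⟩
end

section
/- For every integer m ≥ 3, the super edge-magic deficiency of P_4 + K̄_m equals m − 1. -/
/-!
In a super edge-magic labeling `(f, g)` with magic constant `k`, the label of an edge `xy` is
`k - f x - f y`, so the edge sums `f x + f y` are pairwise distinct; as `f` is a bijection onto
`{1, …, p}` they lie in `{3, …, 2p - 1}`, whence `q ≤ 2p - 3`. The graph `P₄ + K̄ₘ ∪ t K₁` has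
`p = m + 4 + t` vertices and `q = 4m + 3` edges, which forces `t ≥ m - 1`.

Conversely, a vertex labeling onto `{1, …, p}` whose edge sums are `q` consecutive integers extends
to a super edge-magic labeling by giving the edges the labels `p + 1, …, p + q` in decreasing order
of their sums. Labeling the path `1, 2, 2m + 2, 2m + 3`, the vertices of `K̄ₘ` by the odd numbers
`3, …, 2m + 1` and `m - 1` isolated vertices by the even numbers `4, …, 2m` gives the edge sums
`3, …, 4m + 5`.
-/

open SimpleGraph

open Function Set

section Labelings

variable {V : Type*}

def edgeLabelSum (f : V → ℕ) : Sym2 V → ℕ :=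
  Sym2.lift ⟨fun x y => f x + f y, fun _ _ => Nat.add_comm _ _⟩

@[simp]
lemma edgeLabelSum_mk (f : V → ℕ) (x y : V) : edgeLabelSum f s(x, y) = f x + f y := rfl

section SuperEdgeMagic

variable [Fintype V] {G : SimpleGraph V}

theorem IsSEM.ncard_edgeSet_le (h : IsSEM G) :
    G.edgeSet.ncard ≤ 2 * Fintype.card V - 3 := by
  obtain ⟨k, f, g, hinj, -, hf, hmagic⟩ := h
  have hf_mem (x : V) : f x ∈ Icc 1 (Fintype.card V) := hf ▸ mem_range_self x
  have hsum : ∀ e (he : e ∈ G.edgeSet), edgeLabelSum f e + g ⟨e, he⟩ = k := by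
    refine Sym2.ind fun x y he => ?_
    have := hmagic x y he
    rw [edgeLabelSum_mk]
    omega
  have hmaps : MapsTo (edgeLabelSum f) G.edgeSet (Icc 3 (2 * Fintype.card V - 1)) := by
    refine Sym2.ind fun x y he => ?_
    have hne : f x ≠ f y := fun hxy => G.ne_of_adj he (hinj.comp Sum.inl_injective hxy)
    have hx := hf_mem x
    have hy := hf_mem y
    simp only [edgeLabelSum_mk, mem_Icc] at hx hy ⊢
    omega
  have hinjOn : InjOn (edgeLabelSum f) G.edgeSet := fun e he e' he' hee' => by
    have hg : g ⟨e, he⟩ = g ⟨e', he'⟩ := by linarith [hsum e he, hsum e' he']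
    simpa using hinj.comp Sum.inr_injective hg
  have := ncard_le_ncard_of_injOn _ hmaps hinjOn
  rw [ncard_Icc_nat] at this
  omega

theorem isSEM_of_bijOn_edgeLabelSum {f : V → ℕ} (hf : Injective f)
    (hrange : range f = Icc 1 (Fintype.card V)) {a b : ℕ}
    (hbij : BijOn (edgeLabelSum f) G.edgeSet (Ico a b)) : IsSEM G := by
  set p := Fintype.card V
  have hf_le (x : V) : f x ≤ p := (hrange ▸ mem_range_self x : f x ∈ Icc 1 p).2
  have hlt (e : G.edgeSet) : edgeLabelSum f e < b := (hbij.mapsTo e.2).2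
  let g : G.edgeSet → ℕ := fun e => p + b - edgeLabelSum f e
  have hrange_g : range g = Icc (p + 1) (p + (b - a)) := by
    ext n
    constructor
    · rintro ⟨e, rfl⟩
      obtain ⟨hea, heb⟩ := hbij.mapsTo e.2
      simp only [g, mem_Icc]
      omega
    · rintro ⟨h1, h2⟩
      obtain ⟨e, he, hs⟩ := hbij.surjOn (show p + b - n ∈ Ico a b by simp only [mem_Ico]; omega)
      exact ⟨⟨e, he⟩, by simp only [g, hs]; omega⟩
  refine ⟨p + b, f, g, ?_, ?_, hrange, fun x y hxy => ?_⟩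
  · rintro (x | e) (y | e') h <;> simp only [Sum.elim_inl, Sum.elim_inr, g] at h
    · rw [hf h]
    · have := hf_le x; have := hlt e'; omega
    · have := hf_le y; have := hlt e; omega
    · have : edgeLabelSum f e = edgeLabelSum f e' := by have := hlt e; have := hlt e'; omega
      exact congrArg Sum.inr (Subtype.ext (hbij.injOn e.2 e'.2 this))
  · rw [Set.Sum.elim_range, hrange, hrange_g, hbij.ncard_eq, ncard_Ico_nat]
    ext n
    simp only [mem_union, mem_Icc]
    omega
  · have := hlt ⟨s(x, y), hxy⟩
    simp only [g, edgeLabelSum_mk] at this ⊢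
    omega

end SuperEdgeMagic

theorem edgeSet_unionIsolated (G : SimpleGraph V) (t : ℕ) :
    (unionIsolated G t).edgeSet = Sym2.map Sum.inl '' G.edgeSet :=
  edgeSet_map _ _

theorem ncard_edgeSet_unionIsolated (G : SimpleGraph V) (t : ℕ) :
    (unionIsolated G t).edgeSet.ncard = G.edgeSet.ncard := by
  rw [edgeSet_unionIsolated, ncard_image_of_injective _ (Sym2.map.injective Sum.inl_injective)]

theorem bijOn_edgeLabelSum_unionIsolated {G : SimpleGraph V} {f : V → ℕ} {S : Set ℕ}
    (h : BijOn (edgeLabelSum f) G.edgeSet S) {t : ℕ} (w : Fin t → ℕ) :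
    BijOn (edgeLabelSum (Sum.elim f w)) (unionIsolated G t).edgeSet S := by
  rw [edgeSet_unionIsolated, ← bijOn_comp_iff (Sym2.map.injective Sum.inl_injective).injOn]
  convert h using 1
  funext e
  induction e using Sym2.ind
  rfl

end Labelings

theorem mem_edgeSet_pathJoin {n m : ℕ} {e : Sym2 (Fin n ⊕ Fin m)} :
    e ∈ (pathJoin n m).edgeSet ↔
      (∃ i j : Fin n, (j : ℕ) = i + 1 ∧ e = s(.inl i, .inl j)) ∨
        ∃ i j, e = s(.inl i, .inr j) := by
  induction e using Sym2.ind with | _ a b => ?_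
  simp only [mem_edgeSet, pathJoin, fromRel_adj]
  constructor
  · rintro ⟨-, (⟨i, j, rfl, rfl, h⟩ | ⟨i, j, rfl, rfl⟩) |
      (⟨i, j, rfl, rfl, h⟩ | ⟨i, j, rfl, rfl⟩)⟩
    · exact .inl ⟨i, j, h, rfl⟩
    · exact .inr ⟨i, j, rfl⟩
    · exact .inl ⟨i, j, h, Sym2.eq_swap⟩
    · exact .inr ⟨i, j, Sym2.eq_swap⟩
  · rintro (⟨i, j, h, he⟩ | ⟨i, j, he⟩) <;>
      rcases Sym2.eq_iff.mp he with ⟨rfl, rfl⟩ | ⟨rfl, rfl⟩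
    · exact ⟨by simp [Fin.ext_iff, h], .inl (.inl ⟨i, j, rfl, rfl, h⟩)⟩
    · exact ⟨by simp [Fin.ext_iff, h], .inr (.inl ⟨i, j, rfl, rfl, h⟩)⟩
    · exact ⟨by simp, .inl (.inr ⟨i, j, rfl, rfl⟩)⟩
    · exact ⟨by simp, .inr (.inr ⟨i, j, rfl, rfl⟩)⟩

theorem mem_edgeSet_pathJoin_four {m : ℕ} {e : Sym2 (Fin 4 ⊕ Fin m)} :
    e ∈ (pathJoin 4 m).edgeSet ↔
      e = s(.inl 0, .inl 1) ∨ e = s(.inl 1, .inl 2) ∨ e = s(.inl 2, .inl 3) ∨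
        ∃ i j, e = s(.inl i, .inr j) := by
  have hpath (i j : Fin 4) : (j : ℕ) = i + 1 ↔ i = 0 ∧ j = 1 ∨ i = 1 ∧ j = 2 ∨ i = 2 ∧ j = 3 := by
    fin_cases i <;> fin_cases j <;> simp
  simp only [mem_edgeSet_pathJoin, hpath]
  aesop

def pathFourLabel (m : ℕ) : Fin 4 ⊕ Fin m → ℕ :=
  Sum.elim ![1, 2, 2 * m + 2, 2 * m + 3] fun j => 2 * j + 3

theorem surjOn_edgeLabelSum_pathFourLabel (m : ℕ) :
    SurjOn (edgeLabelSum (pathFourLabel m)) (pathJoin 4 m).edgeSet (Ico 3 (4 * m + 6)) := by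
  rintro s ⟨hs3, hs⟩
  have hjoin (i : Fin 4) (j : ℕ) (hj : j < m)
      (h : s = pathFourLabel m (.inl i) + (2 * j + 3)) :
      s ∈ edgeLabelSum (pathFourLabel m) '' (pathJoin 4 m).edgeSet :=
    ⟨s(.inl i, .inr ⟨j, hj⟩), mem_edgeSet_pathJoin_four.2 (.inr (.inr (.inr ⟨i, _, rfl⟩))),
      h.symm⟩
  rcases (by omega : s = 3 ∨ s = 2 * m + 4 ∨ s = 4 * m + 5 ∨ (s % 2 = 0 ∧ s ≤ 2 * m + 2) ∨
      (s % 2 = 1 ∧ 5 ≤ s ∧ s ≤ 2 * m + 3) ∨ (s % 2 = 1 ∧ 2 * m + 5 ≤ s ∧ s ≤ 4 * m + 3) ∨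
      (s % 2 = 0 ∧ 2 * m + 6 ≤ s ∧ s ≤ 4 * m + 4)) with rfl | rfl | rfl | h | h | h | h
  · exact ⟨s(.inl 0, .inl 1), mem_edgeSet_pathJoin_four.2 (.inl rfl), rfl⟩
  · exact ⟨s(.inl 1, .inl 2), mem_edgeSet_pathJoin_four.2 (.inr (.inl rfl)),
      show 2 + (2 * m + 2) = 2 * m + 4 by ring⟩
  · exact ⟨s(.inl 2, .inl 3), mem_edgeSet_pathJoin_four.2 (.inr (.inr (.inl rfl))),
      show 2 * m + 2 + (2 * m + 3) = 4 * m + 5 by ring⟩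
  · exact hjoin 0 ((s - 4) / 2) (by omega) (show s = 1 + _ by omega)
  · exact hjoin 1 ((s - 5) / 2) (by omega) (show s = 2 + _ by omega)
  · exact hjoin 2 ((s - 2 * m - 5) / 2) (by omega) (show s = 2 * m + 2 + _ by omega)
  · exact hjoin 3 ((s - 2 * m - 6) / 2) (by omega) (show s = 2 * m + 3 + _ by omega)

theorem bijOn_edgeLabelSum_pathFourLabel (m : ℕ) :
    BijOn (edgeLabelSum (pathFourLabel m)) (pathJoin 4 m).edgeSet (Ico 3 (4 * m + 6)) := by
  refine ⟨fun e he => ?_, fun e he e' he' hee' => ?_, surjOn_edgeLabelSum_pathFourLabel m⟩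
  · rw [mem_edgeSet_pathJoin_four] at he
    rcases he with rfl | rfl | rfl | ⟨i, j, rfl⟩
    all_goals
      try fin_cases i
    all_goals
      simp only [edgeLabelSum_mk, pathFourLabel, Sum.elim_inl, Sum.elim_inr, Matrix.cons_val,
        Matrix.cons_val_zero, Matrix.cons_val_one, Fin.isValue, Fin.reduceFinMk, Fin.mk_one,
        Fin.zero_eta, mem_Ico]
      try omega
  · rw [mem_edgeSet_pathJoin_four] at he he'
    rcases he with rfl | rfl | rfl | ⟨i, j, rfl⟩ <;>
      rcases he' with rfl | rfl | rfl | ⟨i', j', rfl⟩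
    all_goals
      try fin_cases i
    all_goals
      try fin_cases i'
    all_goals
      simp only [edgeLabelSum_mk, pathFourLabel, Sum.elim_inl, Sum.elim_inr, Matrix.cons_val,
        Matrix.cons_val_zero, Matrix.cons_val_one, Fin.isValue, Fin.reduceFinMk, Fin.mk_one,
        Fin.zero_eta, Sym2.congr_right, Sum.inr.injEq, Fin.ext_iff] at hee' ⊢
      try omega

theorem ncard_edgeSet_pathJoin_four (m : ℕ) : (pathJoin 4 m).edgeSet.ncard = 4 * m + 3 := by
  rw [(bijOn_edgeLabelSum_pathFourLabel m).ncard_eq, ncard_Ico_nat]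
  omega

theorem isSEM_unionIsolated_pathJoin_four {m : ℕ} (hm : 0 < m) :
    IsSEM (unionIsolated (pathJoin 4 m) (m - 1)) := by
  let f := Sum.elim (pathFourLabel m) fun j : Fin (m - 1) => 2 * j + 4
  have hcard : Fintype.card ((Fin 4 ⊕ Fin m) ⊕ Fin (m - 1)) = 2 * m + 3 := by
    simp only [Fintype.card_sum, Fintype.card_fin]
    omega
  refine isSEM_of_bijOn_edgeLabelSum (f := f) ?_ ?_
    (bijOn_edgeLabelSum_unionIsolated (bijOn_edgeLabelSum_pathFourLabel m) _)
  · rintro ((i | j) | j) ((i' | j') | j') h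
    all_goals
      try fin_cases i
    all_goals
      try fin_cases i'
    all_goals
      simp only [f, pathFourLabel, Sum.elim_inl, Sum.elim_inr, Matrix.cons_val,
        Matrix.cons_val_zero, Matrix.cons_val_one, Fin.isValue, Fin.reduceFinMk, Fin.mk_one,
        Fin.zero_eta, Sum.inl.injEq, Sum.inr.injEq, Fin.ext_iff] at h ⊢
      try omega
  · rw [hcard]
    ext n
    constructor
    · rintro ⟨(i | j) | j, rfl⟩
      all_goals
        try fin_cases i
      all_goals
        simp only [f, pathFourLabel, Sum.elim_inl, Sum.elim_inr, Matrix.cons_val,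
          Matrix.cons_val_zero, Matrix.cons_val_one, Fin.isValue, Fin.reduceFinMk, Fin.mk_one,
          Fin.zero_eta, mem_Icc]
        try omega
    · rintro ⟨hn1, hn⟩
      rcases (by omega : n = 1 ∨ n = 2 ∨ n = 2 * m + 2 ∨ n = 2 * m + 3 ∨
          (n % 2 = 1 ∧ 3 ≤ n ∧ n ≤ 2 * m + 1) ∨ (n % 2 = 0 ∧ 4 ≤ n ∧ n ≤ 2 * m)) with
        rfl | rfl | rfl | rfl | h | h
      · exact ⟨.inl (.inl 0), rfl⟩
      · exact ⟨.inl (.inl 1), rfl⟩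
      · exact ⟨.inl (.inl 2), rfl⟩
      · exact ⟨.inl (.inl 3), rfl⟩
      · exact ⟨.inl (.inr ⟨(n - 3) / 2, by omega⟩), show 2 * ((n - 3) / 2) + 3 = n by omega⟩
      · exact ⟨.inr ⟨(n - 4) / 2, by omega⟩, show 2 * ((n - 4) / 2) + 4 = n by omega⟩

/-- for every `m ≥ 3`, `μₛ(P₄ + K̄_m) = m − 1`. -/
theorem stmt11 (m : ℕ) (hm : 3 ≤ m) :
    semDeficiency (pathJoin 4 m) = ((m - 1 : ℕ) : ℕ∞) := by
  refine le_antisymm (sInf_le ⟨m - 1, isSEM_unionIsolated_pathJoin_four (by omega), rfl⟩)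
    (le_sInf ?_)
  rintro _ ⟨t, ht, rfl⟩
  have hq := ht.ncard_edgeSet_le
  rw [ncard_edgeSet_unionIsolated, ncard_edgeSet_pathJoin_four, Fintype.card_sum,
    Fintype.card_sum, Fintype.card_fin, Fintype.card_fin, Fintype.card_fin] at hq
  exact ENat.natCast_le_natCast.mpr (by omega)
end
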